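/- Let (z₁,z₂,z₃) ∈ ℤ³ and let A ∈ Lk(3) be the corresponding linking matrix. If some element γ = (ε₀,ε₁,ε₂,ε₃,p) ∈ Γ₃ with ε₀ = −1 satisfies γ·A = A, then z_i = 0 for at least one i ∈ {1,2,3}. -/
import Mathlib


/-- An element `(ε₀, ε₁, …, ε_μ, p)` of the Whitten group `Γ_μ`:
a sign `ε₀ ∈ {±1}`, signs `ε₁, …, ε_μ` (indexed here by `Fin μ`, so `eps i` is `ε_{i+1}`),
and a permutation `p ∈ S_μ`. -/
@[ext]
structure Whitten (mu : ℕ) where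
  e0 : ℤˣ
  eps : Fin mu → ℤˣ
  perm : Equiv.Perm (Fin mu)

namespace Whitten

variable {mu : ℕ}

/-- The Whitten multiplication
`(ε₀,ε₁,…,ε_μ,p) * (ε₀',ε₁',…,ε_μ',q) = (ε₀ε₀', ε₁ε'_{p(1)}, …, ε_με'_{p(μ)}, qp)`. -/
instance : Mul (Whitten mu) :=
  ⟨fun a b => ⟨a.e0 * b.e0, fun i => a.eps i * b.eps (a.perm i), b.perm * a.perm⟩⟩

instance : One (Whitten mu) := ⟨⟨1, fun _ => 1, 1⟩⟩

instance : Inv (Whitten mu) :=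
  ⟨fun a => ⟨a.e0⁻¹, fun i => (a.eps (a.perm⁻¹ i))⁻¹, a.perm⁻¹⟩⟩

@[simp] lemma mul_e0 (a b : Whitten mu) : (a * b).e0 = a.e0 * b.e0 := rfl
@[simp] lemma mul_eps (a b : Whitten mu) (i : Fin mu) :
    (a * b).eps i = a.eps i * b.eps (a.perm i) := rfl
@[simp] lemma mul_perm (a b : Whitten mu) : (a * b).perm = b.perm * a.perm := rfl
@[simp] lemma one_e0 : (1 : Whitten mu).e0 = 1 := rfl
@[simp] lemma one_eps (i : Fin mu) : (1 : Whitten mu).eps i = 1 := rfl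
@[simp] lemma one_perm : (1 : Whitten mu).perm = 1 := rfl
@[simp] lemma inv_e0 (a : Whitten mu) : (a⁻¹).e0 = a.e0⁻¹ := rfl
@[simp] lemma inv_eps (a : Whitten mu) (i : Fin mu) :
    (a⁻¹).eps i = (a.eps (a.perm⁻¹ i))⁻¹ := rfl
@[simp] lemma inv_perm (a : Whitten mu) : (a⁻¹).perm = a.perm⁻¹ := rfl

/-- The Whitten group `Γ_μ`. -/
instance : Group (Whitten mu) where
  mul_assoc a b c := by
    ext i <;> simp [mul_assoc, Equiv.Perm.mul_apply]
  one_mul a := by ext i <;> simp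
  mul_one a := by ext i <;> simp
  inv_mul_cancel a := by ext i <;> simp

end Whitten

/-- `Lk n` is the set of symmetric `n × n` integer matrices with zeros on the diagonal. -/
def Lk (n : ℕ) : Set (Matrix (Fin n) (Fin n) ℤ) :=
  {A | A.IsSymm ∧ ∀ i, A i i = 0}

/-- The action of the Whitten group `Γ_n` on `n × n` linking matrices:
`(γ · A)_{ij} = ε₀ ε_i ε_j A_{p(i) p(j)}` for `γ = (ε₀, ε₁, …, ε_n, p)`. -/
def lkAct {n : ℕ} (γ : Whitten n) (A : Matrix (Fin n) (Fin n) ℤ) :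
    Matrix (Fin n) (Fin n) ℤ :=
  Matrix.of fun i j =>
    (γ.e0 : ℤ) * (γ.eps i : ℤ) * (γ.eps j : ℤ) * A (γ.perm i) (γ.perm j)

/-- The correspondence between triples `(z₁, z₂, z₃) ∈ ℤ³` and linking matrices in `Lk 3`:
`A₂₃ = A₃₂ = z₁`, `A₁₃ = A₃₁ = z₂`, `A₁₂ = A₂₁ = z₃` (here written with indices `0,1,2`). -/
def tripleToMatrix (z : Fin 3 → ℤ) : Matrix (Fin 3) (Fin 3) ℤ :=
  !![0, z 2, z 1; z 2, 0, z 0; z 1, z 0, 0]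

/-- If some `γ = (ε₀,ε₁,ε₂,ε₃,p) ∈ Γ₃` with `ε₀ = −1` stabilizes the linking matrix
corresponding to `(z₁,z₂,z₃) ∈ ℤ³`, then some `z_i = 0`. -/
theorem exists_zero_of_mirror_stabilizes (z : Fin 3 → ℤ) (γ : Whitten 3)
    (he0 : γ.e0 = -1) (hstab : lkAct γ (tripleToMatrix z) = tripleToMatrix z) :
    ∃ i : Fin 3, z i = 0 := by
  have h01 := congrFun (congrFun hstab 0) 1
  have h02 := congrFun (congrFun hstab 0) 2
  have h12 := congrFun (congrFun hstab 1) 2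
  obtain ⟨a0, ha0⟩ : ∃ x, γ.perm 0 = x := ⟨_, rfl⟩
  obtain ⟨a1, ha1⟩ : ∃ x, γ.perm 1 = x := ⟨_, rfl⟩
  obtain ⟨a2, ha2⟩ : ∃ x, γ.perm 2 = x := ⟨_, rfl⟩
  have i01 : a0 ≠ a1 := fun h => by
    have := γ.perm.injective (ha0.trans (h.trans ha1.symm)); simp at this
  have i02 : a0 ≠ a2 := fun h => by
    have := γ.perm.injective (ha0.trans (h.trans ha2.symm)); simp at this
  have i12 : a1 ≠ a2 := fun h => by
    have := γ.perm.injective (ha1.trans (h.trans ha2.symm)); simp at this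
  simp only [lkAct, tripleToMatrix, he0, ha0, ha1, ha2, Matrix.of_apply] at h01 h02 h12
  fin_cases a0 <;> fin_cases a1 <;> fin_cases a2 <;>
    first
      | exact absurd rfl i01
      | exact absurd rfl i02
      | exact absurd rfl i12
      | (simp at h01 h02 h12
         rcases Int.units_eq_one_or (γ.eps 0) with he1 | he1 <;>
         rcases Int.units_eq_one_or (γ.eps 1) with he2 | he2 <;>
         rcases Int.units_eq_one_or (γ.eps 2) with he3 | he3 <;>
         simp only [he1, he2, he3, Units.val_neg, Units.val_one, neg_mul, one_mul,
           neg_neg, mul_one, mul_neg] at h01 h02 h12 <;>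
         first
           | exact ⟨0, by omega⟩
           | exact ⟨1, by omega⟩
           | exact ⟨2, by omega⟩)
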